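/- Signed area difference between M and its involute N: SA(M) - SA(N) = ∫₀^π β²(θ)[v,v'](θ) dθ, where SA(M) = -∫₀^π [M,M']dθ is the signed area (over a half-period, using the symmetry relations). -/

import Mathlib

/-!
The involute is `N = M + W` with offset `W = β v`, parallel to the velocity `M' = α u'`.
For such an offset `[N, N'] - [M, M'] = [M, W]' + [W, W']`, and `[W, W'] = β² [v, v']`
because `W' = β v' - α u'` with `u' ∥ v`. The boundary term `[M, W]` takes the same value
at `0` and `π`, since `M` is π-periodic while `β` and `v` are both π-antiperiodic.
-/

open Real

/-- Determinant of two plane vectors. -/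
noncomputable def det2 (w₁ w₂ : ℝ × ℝ) : ℝ := w₁.1 * w₂.2 - w₁.2 * w₂.1

lemma det2_neg_neg (w₁ w₂ : ℝ × ℝ) : det2 (-w₁) (-w₂) = det2 w₁ w₂ := by
  simp only [det2, Prod.fst_neg, Prod.snd_neg]; ring

lemma det2_sub_right (w₁ w₂ w₃ : ℝ × ℝ) : det2 w₁ (w₂ - w₃) = det2 w₁ w₂ - det2 w₁ w₃ := by
  simp only [det2, Prod.fst_sub, Prod.snd_sub]; ring

lemma det2_smul_smul_self (a b : ℝ) (w : ℝ × ℝ) : det2 (a • w) (b • w) = 0 := by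
  simp only [det2, Prod.smul_fst, Prod.smul_snd, smul_eq_mul]; ring

lemma det2_smul_smul (a b : ℝ) (w₁ w₂ : ℝ × ℝ) :
    det2 (a • w₁) (b • w₂) = a * b * det2 w₁ w₂ := by
  simp only [det2, Prod.smul_fst, Prod.smul_snd, smul_eq_mul]; ring

@[fun_prop]
lemma Continuous.det2 {A B : ℝ → ℝ × ℝ} (hA : Continuous A) (hB : Continuous B) :
    Continuous fun t => det2 (A t) (B t) := by
  unfold _root_.det2; fun_prop

lemma HasDerivAt.det2 {A B : ℝ → ℝ × ℝ} {A' B' : ℝ × ℝ} {θ : ℝ}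
    (hA : HasDerivAt A A' θ) (hB : HasDerivAt B B' θ) :
    HasDerivAt (fun t => det2 (A t) (B t)) (det2 A' (B θ) + det2 (A θ) B') θ := by
  have hA₁ : HasDerivAt (fun t => (A t).1) A'.1 θ := by
    simpa using hA.hasFDerivAt.fst.hasDerivAt
  have hA₂ : HasDerivAt (fun t => (A t).2) A'.2 θ := by
    simpa using hA.hasFDerivAt.snd.hasDerivAt
  have hB₁ : HasDerivAt (fun t => (B t).1) B'.1 θ := by
    simpa using hB.hasFDerivAt.fst.hasDerivAt
  have hB₂ : HasDerivAt (fun t => (B t).2) B'.2 θ := by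
    simpa using hB.hasFDerivAt.snd.hasDerivAt
  refine ((hA₁.mul hB₂).sub (hA₂.mul hB₁)).congr_deriv ?_
  simp only [_root_.det2]; ring

lemma Function.Antiperiodic.of_hasDerivAt {f f' : ℝ → ℝ × ℝ} {c : ℝ}
    (hf : Function.Antiperiodic f c) (hf' : ∀ t, HasDerivAt f (f' t) t) :
    Function.Antiperiodic f' c := fun t =>
  ((hf' (t + c)).comp_add_const t c).unique <| by
    rw [show (fun x => f (x + c)) = fun x => -f x from funext hf]
    exact (hf' t).neg

theorem integral_det2_add_sub_integral_det2 {M W M' W' : ℝ → ℝ × ℝ} {a b : ℝ}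
    (hM : ∀ t, HasDerivAt M (M' t) t) (hW : ∀ t, HasDerivAt W (W' t) t)
    (hM'c : Continuous M') (hW'c : Continuous W') (hpar : ∀ t, det2 (W t) (M' t) = 0) :
    (∫ t in a..b, det2 (M t + W t) (M' t + W' t)) - ∫ t in a..b, det2 (M t) (M' t)
      = det2 (M b) (W b) - det2 (M a) (W a) + ∫ t in a..b, det2 (W t) (W' t) := by
  have hMc : Continuous M := continuous_iff_continuousAt.2 fun t => (hM t).continuousAt
  have hWc : Continuous W := continuous_iff_continuousAt.2 fun t => (hW t).continuousAt
  have hpointwise : ∀ t, det2 (M t + W t) (M' t + W' t) - det2 (M t) (M' t)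
      = (det2 (M' t) (W t) + det2 (M t) (W' t)) + det2 (W t) (W' t) := fun t => by
    have h := hpar t
    simp only [det2, Prod.fst_add, Prod.snd_add] at h ⊢
    linear_combination 2 * h
  have hint {f : ℝ → ℝ} (hf : Continuous f) : IntervalIntegrable f MeasureTheory.volume a b :=
    hf.intervalIntegrable a b
  rw [← intervalIntegral.integral_sub (hint (by fun_prop)) (hint (by fun_prop)),
    intervalIntegral.integral_congr fun t _ => hpointwise t,
    intervalIntegral.integral_add (hint (by fun_prop)) (hint (by fun_prop)),
    intervalIntegral.integral_eq_sub_of_hasDerivAt (fun t _ => (hM t).det2 (hW t))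
      (hint (by fun_prop))]

theorem signed_area_difference_general (u u' v v' M : ℝ → ℝ × ℝ) (α β : ℝ → ℝ)
    (hu : ∀ θ, HasDerivAt u (u' θ) θ)
    (hdet : ∀ θ, 0 < det2 (u θ) (u' θ))
    (husym : ∀ θ, u (θ + π) = -u θ)
    (hv : ∀ θ, v θ = (det2 (u θ) (u' θ))⁻¹ • u' θ)
    (hv' : ∀ θ, HasDerivAt v (v' θ) θ)
    (hM : ∀ θ, HasDerivAt M (α θ • u' θ) θ)
    (hMper : ∀ θ, M (θ + π) = M θ)
    (hβ : ∀ θ, HasDerivAt β (-(α θ * det2 (u θ) (u' θ))) θ)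
    (hβanti : ∀ θ, β (θ + π) = -β θ)
    (hcontα : Continuous α) (hcontu' : Continuous u') (hcontv' : Continuous v') :
    (-(∫ θ in (0:ℝ)..π, det2 (M θ) (α θ • u' θ)))
      - (-(∫ θ in (0:ℝ)..π, det2 (M θ + β θ • v θ) (β θ • v' θ)))
      = ∫ θ in (0:ℝ)..π, (β θ) ^ 2 * det2 (v θ) (v' θ) := by
  -- `β' v = -α u'`, so the offset `β v` moves with velocity `β v' - α u'`.
  have hβv : ∀ θ, HasDerivAt (fun t => β t • v t) (β θ • v' θ - α θ • u' θ) θ := fun θ => by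
    refine ((hβ θ).smul (hv' θ)).congr_deriv ?_
    rw [hv θ, smul_smul, neg_mul, mul_assoc, mul_inv_cancel₀ (hdet θ).ne', mul_one, neg_smul,
      sub_eq_add_neg, add_comm]
  have hpar : ∀ θ, det2 (β θ • v θ) (α θ • u' θ) = 0 := fun θ => by
    rw [hv θ, smul_smul, det2_smul_smul_self]
  have hvπ : v π = -v 0 := by
    have hu'π := (Function.Antiperiodic.of_hasDerivAt husym hu) 0
    rw [zero_add] at hu'π
    rw [hv, hv, hu'π, ← zero_add π, husym, det2_neg_neg, smul_neg]
  have hβπ : β π = -β 0 := by simpa using hβanti 0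
  have hMπ : M π = M 0 := by simpa using hMper 0
  have hβc : Continuous β := continuous_iff_continuousAt.2 fun θ => (hβ θ).continuousAt
  have harea := integral_det2_add_sub_integral_det2 (a := 0) (b := π) hM hβv
    (by fun_prop) (by fun_prop) hpar
  simp only [add_sub_cancel, hvπ, hβπ, hMπ, neg_smul, smul_neg, neg_neg, sub_self,
    zero_add] at harea
  rw [neg_sub_neg, harea]
  refine intervalIntegral.integral_congr fun θ _ => ?_
  rw [det2_sub_right, hpar, sub_zero, det2_smul_smul, sq]

/-- Signed area difference between the area evolute M and its involute
N = M + βv: SA(M) - SA(N) = ∫₀^π β²[v,v'] dθ. -/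
theorem signed_area_difference (u u' v v' M : ℝ → ℝ × ℝ) (α β : ℝ → ℝ)
    (hu : ∀ θ, HasDerivAt u (u' θ) θ)
    (hdet : ∀ θ, 0 < det2 (u θ) (u' θ))
    (husym : ∀ θ, u (θ + π) = -u θ)
    (hv : ∀ θ, v θ = (det2 (u θ) (u' θ))⁻¹ • u' θ)
    (hv' : ∀ θ, HasDerivAt v (v' θ) θ)
    (hM : ∀ θ, HasDerivAt M (α θ • u' θ) θ)
    (hMper : ∀ θ, M (θ + π) = M θ)
    (hαsym : ∀ θ, α (θ + π) = -α θ)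
    (hβ : ∀ θ, HasDerivAt β (-(α θ * det2 (u θ) (u' θ))) θ)
    (hβanti : ∀ θ, β (θ + π) = -β θ)
    (hcontα : Continuous α) (hcontu' : Continuous u') (hcontv' : Continuous v') :
    (-(∫ θ in (0:ℝ)..π, det2 (M θ) (α θ • u' θ)))
      - (-(∫ θ in (0:ℝ)..π, det2 (M θ + β θ • v θ) (β θ • v' θ)))
      = ∫ θ in (0:ℝ)..π, (β θ) ^ 2 * det2 (v θ) (v' θ) :=
  signed_area_difference_general u u' v v' M α β hu hdet husym hv hv' hM hMper hβ hβanti hcontα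
    hcontu' hcontv'
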